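/- For ν > 1/2 and x ≥ 0, the Bessel function ratio satisfies x/(ν + sqrt(ν² + x²)) ≤ h_ν(x) ≤ x/((2ν−1)/2 + sqrt((2ν−1)²/4 + x²)). -/

import Mathlib

/-- Modified Bessel function of the first kind of order `ν`. -/
noncomputable def besselI (ν x : ℝ) : ℝ :=
  ∑' k : ℕ, (x / 2) ^ (2 * (k : ℝ) + ν) / (k.factorial * Real.Gamma ((k : ℝ) + ν + 1))

/-- Ratio `h_ν(x) = I_ν(x) / I_{ν-1}(x)`. -/
noncomputable def besselRatio (ν x : ℝ) : ℝ := besselI ν x / besselI (ν - 1) x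

/-!
Write `I_α(x) = (x/2)^α S_α(x²/4)` with the entire series `S_α(y) = ∑ yᵏ / (k! Γ(k+α+1))`,
so that `h_ν(x) = x / (2r)` for `r = S_{ν-1}(y) / S_ν(y)`, `y = x²/4`. The recurrence
`S_{ν-1} = ν S_ν + y S_{ν+1}` and the Cauchy product
`S_α S_β = ∑ₙ binom(α+β+2n, n) yⁿ / (Γ(α+n+1) Γ(β+n+1))` (Chu–Vandermonde) give, comparing
coefficients, the Turán inequality `S_{ν-1} S_{ν+1} ≤ S_ν²` and, for `ν ≥ 1/2`,
`2y (S_ν² - S_{ν-1} S_{ν+1}) ≤ S_ν S_{ν-1}`. In terms of `r` these say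
`r² - ν r ≤ y ≤ r² - (ν - 1/2) r`, and solving both quadratic inequalities for `r` gives the
bounds.
-/

open Real Finset Polynomial
open scoped Nat

section RingChoose

variable {K : Type*} [Field K] [CharZero K]

theorem ringChoose_succ_mul (r : K) (k : ℕ) :
    Ring.choose r (k + 1) * (k + 1) = Ring.choose r k * (r - k) := by
  rw [Ring.choose_eq_smul, Ring.choose_eq_smul, descPochhammer_succ_right, smeval_mul, smeval_sub,
    smeval_X, smeval_natCast]
  simp only [smul_eq_mul, Nat.factorial_succ]
  push_cast
  field_simp
  simp

theorem ringChoose_succ_succ_mul (r : K) (k : ℕ) :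
    Ring.choose (r + 1) (k + 1) * (k + 1) = Ring.choose r k * (r + 1) := by
  rw [Ring.choose_succ_succ, add_mul, ringChoose_succ_mul]
  ring

end RingChoose

theorem ringChoose_eq_Gamma_div {r : ℝ} {k : ℕ} (hk : (k : ℝ) < r + 1) :
    Ring.choose r k = Gamma (r + 1) / (k ! * Gamma (r - k + 1)) := by
  induction k with
  | zero =>
    have := (Gamma_pos_of_pos (show 0 < r + 1 by simpa using hk)).ne'
    simp [this]
  | succ k ih =>
    push_cast at hk
    have hrk : 0 < r - k := by linarith
    have hG : Gamma (r - k + 1) = (r - k) * Gamma (r - (k + 1) + 1) := by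
      rw [show r - (k + 1) + 1 = r - k by ring, Gamma_add_one hrk.ne']
    have hGpos := Gamma_pos_of_pos (show 0 < r - (k + 1) + 1 by linarith)
    have hchoose := ringChoose_succ_mul r k
    rw [ih (by linarith), hG] at hchoose
    rw [Nat.factorial_succ]
    push_cast
    field_simp at hchoose ⊢
    linear_combination hchoose

noncomputable def besselCoeff (α : ℝ) (k : ℕ) : ℝ := (k ! * Gamma (k + α + 1))⁻¹

noncomputable def besselSeries (α y : ℝ) : ℝ := ∑' k, besselCoeff α k * y ^ k

section BesselSeries

variable {α : ℝ}

theorem natCast_add_add_one_pos (hα : -1 < α) (k : ℕ) : 0 < (k : ℝ) + α + 1 := by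
  have := k.cast_nonneg (α := ℝ)
  linarith

theorem besselCoeff_pos (hα : -1 < α) (k : ℕ) : 0 < besselCoeff α k := by
  have := Gamma_pos_of_pos (natCast_add_add_one_pos hα k)
  unfold besselCoeff
  positivity

theorem besselCoeff_succ (hα : -1 < α) (k : ℕ) :
    besselCoeff α (k + 1) = besselCoeff α k / ((k + 1) * (k + α + 1)) := by
  have hk := natCast_add_add_one_pos hα k
  simp only [besselCoeff, Nat.factorial_succ, Nat.cast_mul, Nat.cast_succ]
  rw [show (k : ℝ) + 1 + α + 1 = k + α + 1 + 1 by ring, Gamma_add_one hk.ne']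
  field_simp

theorem besselCoeff_sub_one_zero (hα : 0 < α) :
    besselCoeff (α - 1) 0 = α * besselCoeff α 0 := by
  simp only [besselCoeff, Nat.factorial_zero, Nat.cast_one, Nat.cast_zero, zero_add, one_mul,
    sub_add_cancel, Gamma_add_one hα.ne']
  field_simp

theorem besselCoeff_sub_one_succ (hα : 0 < α) (k : ℕ) :
    besselCoeff (α - 1) (k + 1) = α * besselCoeff α (k + 1) + besselCoeff (α + 1) k := by
  have hk : 0 < (k : ℝ) + α + 1 := by positivity
  have hG := Gamma_pos_of_pos hk
  simp only [besselCoeff, Nat.factorial_succ, Nat.cast_mul, Nat.cast_succ]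
  rw [show (k : ℝ) + 1 + (α - 1) + 1 = k + α + 1 by ring,
    show (k : ℝ) + 1 + α + 1 = k + α + 1 + 1 by ring,
    show (k : ℝ) + (α + 1) + 1 = k + α + 1 + 1 by ring, Gamma_add_one hk.ne']
  field_simp
  ring

theorem summable_norm_besselCoeff_mul_pow (hα : -1 < α) (y : ℝ) :
    Summable fun k ↦ ‖besselCoeff α k * y ^ k‖ := by
  refine summable_of_ratio_norm_eventually_le (r := 1 / 2) (by norm_num) ?_
  filter_upwards [Filter.eventually_ge_atTop ⌈2 * |y|⌉₊] with k hk
  have hky : 2 * |y| ≤ k := Nat.ceil_le.mp hk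
  have hk := natCast_add_add_one_pos hα k
  have hd : 2 * |y| ≤ (k + 1) * (k + α + 1) := by nlinarith
  have hstep : besselCoeff α (k + 1) * y ^ (k + 1)
      = besselCoeff α k * y ^ k * (y / ((k + 1) * (k + α + 1))) := by
    rw [besselCoeff_succ hα, pow_succ]
    ring
  rw [norm_norm, norm_norm, hstep, norm_mul, mul_comm (1 / 2 : ℝ)]
  gcongr
  rw [Real.norm_eq_abs, abs_div, abs_of_pos (by positivity : (0 : ℝ) < (k + 1) * (k + α + 1)),
    div_le_iff₀ (by positivity)]
  linarith

theorem summable_besselCoeff_mul_pow (hα : -1 < α) (y : ℝ) :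
    Summable fun k ↦ besselCoeff α k * y ^ k :=
  (summable_norm_besselCoeff_mul_pow hα y).of_norm

theorem besselSeries_pos (hα : -1 < α) {y : ℝ} (hy : 0 ≤ y) : 0 < besselSeries α y :=
  (summable_besselCoeff_mul_pow hα y).tsum_pos
    (fun k ↦ mul_nonneg (besselCoeff_pos hα k).le (pow_nonneg hy k)) 0
    (by simpa using besselCoeff_pos hα 0)

theorem besselSeries_sub_one (hα : 0 < α) (y : ℝ) :
    besselSeries (α - 1) y = α * besselSeries α y + y * besselSeries (α + 1) y := by
  have hs := summable_besselCoeff_mul_pow (show -1 < α by linarith) y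
  have hs_succ := (summable_nat_add_iff 1).mpr hs
  have hs' := summable_besselCoeff_mul_pow (show -1 < α + 1 by linarith) y
  calc besselSeries (α - 1) y
      = besselCoeff (α - 1) 0 * y ^ 0 + ∑' k, besselCoeff (α - 1) (k + 1) * y ^ (k + 1) :=
        (summable_besselCoeff_mul_pow (show -1 < α - 1 by linarith) y).tsum_eq_zero_add
    _ = α * (besselCoeff α 0 * y ^ 0) + ∑' k, (α * (besselCoeff α (k + 1) * y ^ (k + 1))
          + y * (besselCoeff (α + 1) k * y ^ k)) := by
        simp only [besselCoeff_sub_one_zero hα, besselCoeff_sub_one_succ hα, pow_succ]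
        ring_nf
    _ = α * besselSeries α y + y * besselSeries (α + 1) y := by
        rw [(hs_succ.mul_left α).tsum_add (hs'.mul_left y), tsum_mul_left, tsum_mul_left,
          besselSeries, besselSeries, hs.tsum_eq_zero_add]
        ring

end BesselSeries

noncomputable def besselProductCoeff (α β : ℝ) (n : ℕ) : ℝ :=
  Ring.choose (α + β + 2 * n) n / (Gamma (α + n + 1) * Gamma (β + n + 1))

section BesselProduct

variable {α β : ℝ}

theorem sum_antidiagonal_besselCoeff_mul (hα : -1 < α) (hβ : -1 < β) (n : ℕ) :
    ∑ ij ∈ antidiagonal n, besselCoeff α ij.1 * besselCoeff β ij.2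
      = besselProductCoeff α β n := by
  have hterm : ∀ ij ∈ antidiagonal n, besselCoeff α ij.1 * besselCoeff β ij.2
      = Ring.choose (β + n) ij.1 * Ring.choose (α + n) ij.2
        / (Gamma (α + n + 1) * Gamma (β + n + 1)) := by
    rintro ⟨i, j⟩ hij
    obtain rfl : n = i + j := (mem_antidiagonal.mp hij).symm
    have hi := natCast_add_add_one_pos hα i
    have hj := natCast_add_add_one_pos hβ j
    have := Gamma_pos_of_pos hi
    have := Gamma_pos_of_pos hj
    push_cast
    rw [ringChoose_eq_Gamma_div (by linarith), ringChoose_eq_Gamma_div (by linarith),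
      show β + (i + j) - i + 1 = j + β + 1 by ring,
      show α + (i + j) - j + 1 = i + α + 1 by ring,
      show α + (i + j) + 1 = i + j + α + 1 by ring,
      show β + (i + j) + 1 = i + j + β + 1 by ring]
    have := Gamma_pos_of_pos (show 0 < (i : ℝ) + j + α + 1 by linarith)
    have := Gamma_pos_of_pos (show 0 < (i : ℝ) + j + β + 1 by linarith)
    simp only [besselCoeff]
    field_simp
  rw [sum_congr rfl hterm, ← sum_div, ← Ring.add_choose_eq n (Commute.all _ _),
    besselProductCoeff]
  ring_nf

theorem besselProductCoeff_nonneg (hα : -1 < α) (hβ : -1 < β) (n : ℕ) :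
    0 ≤ besselProductCoeff α β n := by
  rw [← sum_antidiagonal_besselCoeff_mul hα hβ]
  exact sum_nonneg fun ij _ ↦ (mul_pos (besselCoeff_pos hα _) (besselCoeff_pos hβ _)).le

theorem hasSum_besselProductCoeff_mul_pow (hα : -1 < α) (hβ : -1 < β) (y : ℝ) :
    HasSum (fun n ↦ besselProductCoeff α β n * y ^ n)
      (besselSeries α y * besselSeries β y) := by
  have hf := summable_norm_besselCoeff_mul_pow hα y
  have hg := summable_norm_besselCoeff_mul_pow hβ y
  have hcauchy : (fun n ↦ ∑ ij ∈ antidiagonal n,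
      besselCoeff α ij.1 * y ^ ij.1 * (besselCoeff β ij.2 * y ^ ij.2))
      = fun n ↦ besselProductCoeff α β n * y ^ n := by
    ext n
    rw [← sum_antidiagonal_besselCoeff_mul hα hβ, sum_mul]
    refine sum_congr rfl fun ij hij ↦ ?_
    rw [← mem_antidiagonal.mp hij, pow_add]
    ring
  rw [← hcauchy, besselSeries, besselSeries,
    tsum_mul_tsum_eq_tsum_sum_antidiagonal_of_summable_norm hf hg]
  exact (summable_norm_sum_mul_antidiagonal_of_summable_norm hf hg).of_norm.hasSum

end BesselProduct

section Turan

variable {ν : ℝ}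

theorem besselProductCoeff_sub (hν : 0 < ν) (n : ℕ) :
    besselProductCoeff ν ν n - besselProductCoeff (ν - 1) (ν + 1) n
      = Ring.choose (2 * ν + 2 * n) n / (Gamma (ν + n + 1) * Gamma (ν + n + 1 + 1)) := by
  have hνn : 0 < ν + n := by positivity
  have h1 : Gamma (ν + n + 1) = (ν + n) * Gamma (ν + n) := Gamma_add_one hνn.ne'
  have h2 : Gamma (ν + n + 1 + 1) = (ν + n + 1) * Gamma (ν + n + 1) :=
    Gamma_add_one (by positivity)
  have := Gamma_pos_of_pos hνn
  simp only [besselProductCoeff]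
  rw [show ν - 1 + (ν + 1) + 2 * n = 2 * ν + 2 * n by ring,
    show ν + ν + 2 * n = 2 * ν + 2 * n by ring,
    show ν - 1 + n + 1 = ν + n by ring, show ν + 1 + n + 1 = ν + n + 1 + 1 by ring, h2, h1]
  field_simp
  ring

theorem besselProductCoeff_sub_nonneg (hν : 0 < ν) (n : ℕ) :
    0 ≤ besselProductCoeff ν ν n - besselProductCoeff (ν - 1) (ν + 1) n := by
  have hn : (n : ℝ) < 2 * ν + 2 * n + 1 := by linarith
  rw [besselProductCoeff_sub hν, ringChoose_eq_Gamma_div hn]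
  have := Gamma_pos_of_pos (show 0 < 2 * ν + 2 * n - n + 1 by linarith)
  have := Gamma_pos_of_pos (show 0 < 2 * ν + 2 * n + 1 by linarith)
  have := Gamma_pos_of_pos (show 0 < ν + n + 1 by positivity)
  have := Gamma_pos_of_pos (show 0 < ν + n + 1 + 1 by positivity)
  positivity

theorem two_mul_besselProductCoeff_sub_le (hν : 1 / 2 ≤ ν) (n : ℕ) :
    2 * (besselProductCoeff ν ν n - besselProductCoeff (ν - 1) (ν + 1) n)
      ≤ besselProductCoeff ν (ν - 1) (n + 1) := by
  have hν0 : 0 < ν := by linarith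
  have hsub := besselProductCoeff_sub_nonneg hν0 n
  have hchoose := ringChoose_succ_succ_mul (2 * ν + 2 * n) n
  rw [besselProductCoeff_sub hν0] at hsub ⊢
  simp only [besselProductCoeff]
  push_cast
  rw [show ν + (ν - 1) + 2 * (n + 1) = 2 * ν + 2 * n + 1 by ring,
    show ν - 1 + (n + 1) + 1 = ν + n + 1 by ring, show ν + (n + 1) + 1 = ν + n + 1 + 1 by ring,
    eq_div_of_mul_eq (by positivity) hchoose]
  have hcoef : 2 ≤ (2 * ν + 2 * n + 1) / (n + 1) := by
    rw [le_div_iff₀ (by positivity)]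
    linarith
  calc 2 * (Ring.choose (2 * ν + 2 * n) n / (Gamma (ν + n + 1) * Gamma (ν + n + 1 + 1)))
      ≤ (2 * ν + 2 * n + 1) / (n + 1)
          * (Ring.choose (2 * ν + 2 * n) n / (Gamma (ν + n + 1) * Gamma (ν + n + 1 + 1))) :=
        mul_le_mul_of_nonneg_right hcoef hsub
    _ = _ := by ring

end Turan

section SeriesInequalities

variable {ν y : ℝ}

theorem besselSeries_mul_le_sq (hν : 0 < ν) (hy : 0 ≤ y) :
    besselSeries (ν - 1) y * besselSeries (ν + 1) y ≤ besselSeries ν y ^ 2 := by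
  rw [sq]
  refine hasSum_le (fun n ↦ ?_)
    (hasSum_besselProductCoeff_mul_pow (by linarith) (by linarith) y)
    (hasSum_besselProductCoeff_mul_pow (by linarith) (by linarith) y)
  exact mul_le_mul_of_nonneg_right (sub_nonneg.mp (besselProductCoeff_sub_nonneg hν n))
    (pow_nonneg hy n)

theorem two_mul_mul_sq_besselSeries_sub_le (hν : 1 / 2 ≤ ν) (hy : 0 ≤ y) :
    2 * y * (besselSeries ν y ^ 2 - besselSeries (ν - 1) y * besselSeries (ν + 1) y)
      ≤ besselSeries ν y * besselSeries (ν - 1) y := by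
  have hdiff := ((hasSum_besselProductCoeff_mul_pow (α := ν) (β := ν) (by linarith)
    (by linarith) y).sub (hasSum_besselProductCoeff_mul_pow (α := ν - 1) (β := ν + 1)
    (by linarith) (by linarith) y)).mul_left (2 * y)
  have htail := (hasSum_nat_add_iff' 1).mpr
    (hasSum_besselProductCoeff_mul_pow (α := ν) (β := ν - 1) (by linarith) (by linarith) y)
  have hcoef (n : ℕ) : 2 * y * (besselProductCoeff ν ν n * y ^ n
      - besselProductCoeff (ν - 1) (ν + 1) n * y ^ n)
      ≤ besselProductCoeff ν (ν - 1) (n + 1) * y ^ (n + 1) := by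
    rw [pow_succ]
    nlinarith [mul_le_mul_of_nonneg_right (two_mul_besselProductCoeff_sub_le hν n)
      (mul_nonneg (pow_nonneg hy n) hy)]
  have hle := hasSum_le hcoef hdiff htail
  have := besselProductCoeff_nonneg (α := ν) (β := ν - 1) (by linarith) (by linarith) 0
  simp only [range_one, sum_singleton, pow_zero, mul_one] at hle
  rw [sq]
  linarith

end SeriesInequalities

noncomputable def besselSeriesRatio (ν y : ℝ) : ℝ := besselSeries (ν - 1) y / besselSeries ν y

section SeriesRatio

variable {ν y : ℝ}

theorem le_besselSeriesRatio (hν : 0 < ν) (hy : 0 ≤ y) : ν ≤ besselSeriesRatio ν y := by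
  have hS := besselSeries_pos (show -1 < ν by linarith) hy
  have hS' := besselSeries_pos (show -1 < ν + 1 by linarith) hy
  rw [besselSeriesRatio, le_div_iff₀ hS, besselSeries_sub_one hν]
  nlinarith

theorem besselSeriesRatio_sq_sub_mul_le (hν : 0 < ν) (hy : 0 ≤ y) :
    besselSeriesRatio ν y ^ 2 - ν * besselSeriesRatio ν y ≤ y := by
  have hS := besselSeries_pos (show -1 < ν by linarith) hy
  have hturan := besselSeries_mul_le_sq hν hy
  have hrec : besselSeries (ν - 1) y * (besselSeries (ν - 1) y - ν * besselSeries ν y)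
      = y * (besselSeries (ν - 1) y * besselSeries (ν + 1) y) := by
    rw [besselSeries_sub_one hν y]
    ring
  rw [besselSeriesRatio, div_pow, ← sub_nonneg]
  field_simp
  linarith [mul_le_mul_of_nonneg_left hturan hy]

theorem le_besselSeriesRatio_sq_sub_mul (hν : 1 / 2 ≤ ν) (hy : 0 ≤ y) :
    y ≤ besselSeriesRatio ν y ^ 2 - (ν - 1 / 2) * besselSeriesRatio ν y := by
  have hS := besselSeries_pos (show -1 < ν by linarith) hy
  have hU := two_mul_mul_sq_besselSeries_sub_le hν hy
  have hrec : besselSeries (ν - 1) y * besselSeries (ν - 1) y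
      = besselSeries (ν - 1) y * (ν * besselSeries ν y + y * besselSeries (ν + 1) y) := by
    rw [← besselSeries_sub_one (by linarith) y]
  rw [besselSeriesRatio, div_pow, ← sub_nonneg]
  field_simp
  linarith

end SeriesRatio

theorem besselI_zero_right {ν : ℝ} (hν : 0 < ν) : besselI ν 0 = 0 := by
  have hterm (k : ℕ) :
      (0 / 2 : ℝ) ^ (2 * (k : ℝ) + ν) / (k.factorial * Gamma ((k : ℝ) + ν + 1)) = 0 := by
    rw [zero_div, zero_rpow (by positivity), zero_div]
  simp only [besselI, hterm, tsum_zero]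

theorem besselI_eq_rpow_mul_besselSeries (ν : ℝ) {x : ℝ} (hx : 0 < x) :
    besselI ν x = (x / 2) ^ ν * besselSeries ν ((x / 2) ^ 2) := by
  rw [besselI, besselSeries, ← tsum_mul_left]
  refine tsum_congr fun k ↦ ?_
  rw [besselCoeff, show 2 * (k : ℝ) + ν = ν + (2 * k : ℕ) by push_cast; ring,
    rpow_add (by positivity), rpow_natCast, pow_mul]
  ring

theorem besselRatio_eq_div_besselSeriesRatio {ν x : ℝ} (hν : 0 < ν) (hx : 0 ≤ x) :
    besselRatio ν x = x / (2 * besselSeriesRatio ν ((x / 2) ^ 2)) := by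
  rcases hx.eq_or_lt with rfl | hx
  · simp [besselRatio, besselI_zero_right hν]
  have hq : 0 < x / 2 := by positivity
  rw [besselRatio, besselI_eq_rpow_mul_besselSeries ν hx,
    besselI_eq_rpow_mul_besselSeries _ hx, besselSeriesRatio, rpow_sub hq, rpow_one]
  have := besselSeries_pos (show -1 < ν by linarith) (sq_nonneg (x / 2))
  have := besselSeries_pos (show -1 < ν - 1 by linarith) (sq_nonneg (x / 2))
  have := rpow_pos_of_pos hq ν
  field_simp

theorem two_mul_le_add_sqrt_of_sq_sub_mul_le {a b r : ℝ} (h : r ^ 2 - a * r ≤ (b / 2) ^ 2) :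
    2 * r ≤ a + √(a ^ 2 + b ^ 2) := by
  have := abs_le_sqrt (show (2 * r - a) ^ 2 ≤ a ^ 2 + b ^ 2 by linarith)
  linarith [le_abs_self (2 * r - a)]

theorem add_sqrt_le_two_mul_of_le_sq_sub_mul {a b r : ℝ} (hr : a ≤ 2 * r)
    (h : (b / 2) ^ 2 ≤ r ^ 2 - a * r) : a + √(a ^ 2 + b ^ 2) ≤ 2 * r := by
  have := sqrt_le_iff.mpr ⟨sub_nonneg.mpr hr, show a ^ 2 + b ^ 2 ≤ (2 * r - a) ^ 2 by linarith⟩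
  linarith

theorem besselRatio_bounds (ν x : ℝ) (hν : 1 / 2 < ν) (hx : 0 ≤ x) :
    x / (ν + Real.sqrt (ν ^ 2 + x ^ 2)) ≤ besselRatio ν x ∧
      besselRatio ν x ≤ x / ((2 * ν - 1) / 2 + Real.sqrt ((2 * ν - 1) ^ 2 / 4 + x ^ 2)) := by
  have hy : 0 ≤ (x / 2) ^ 2 := sq_nonneg _
  have hr : ν ≤ besselSeriesRatio ν ((x / 2) ^ 2) := le_besselSeriesRatio (by linarith) hy
  rw [besselRatio_eq_div_besselSeriesRatio (by linarith) hx,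
    show (2 * ν - 1) / 2 = ν - 1 / 2 by ring, show (2 * ν - 1) ^ 2 / 4 = (ν - 1 / 2) ^ 2 by ring]
  constructor
  · exact div_le_div_of_nonneg_left hx (by linarith) <|
      two_mul_le_add_sqrt_of_sq_sub_mul_le (besselSeriesRatio_sq_sub_mul_le (by linarith) hy)
  · exact div_le_div_of_nonneg_left hx (by positivity) <|
      add_sqrt_le_two_mul_of_le_sq_sub_mul (by linarith)
        (le_besselSeriesRatio_sq_sub_mul hν.le hy)
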